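/- For an odd integer t = 2s+1 ≥ 3, write P_t^L := P_{s+1}. Then for every word v over {L,R}, every n ∈ ℕ, and every d ∈ ℤ: P_{vRL^n}(d) = (1/2)^{n+1}·P_{h(v)}^L(d+n+1) + Σ_{i=1−n}^{1} (1/2)^{2−i}·P_v(d−i), where vRL^n denotes the word v followed by one letter R and then n letters L. -/

import Mathlib

/-- The probability mass functions `P t` on ℤ, defined by
`P 1 = δ₀`, `P (2t) = P t`, `P (2t+1) d = ½ P (t+1) (d+1) + ½ P t (d-1)`. -/
noncomputable def P : ℕ → ℤ → ℝ
  | 0, _ => 0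
  | 1, d => if d = 0 then 1 else 0
  | (n+2), d =>
      if h : (n + 2) % 2 = 0 then P ((n+2)/2) d
      else (1/2) * P ((n+2)/2 + 1) (d+1) + (1/2) * P ((n+2)/2) (d-1)
  decreasing_by all_goals omega

/-- Letters of the alphabet. -/
inductive LR | L | R
deriving DecidableEq

/-- One step of the identification of words with odd integers: `L : t ↦ 2t-1`, `R : t ↦ 2t+1`. -/
def LRstep (t : ℕ) : LR → ℕ
  | LR.L => 2 * t - 1
  | LR.R => 2 * t + 1

/-- The odd integer associated to a word over `{L,R}`, starting from 3. -/
def hword (w : List LR) : ℕ := w.foldl LRstep 3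

/-!
Since `h(vRLⁿ) = 2ⁿ⁺¹·h(v) + 1` and `P (2m) = P m`, one step of the odd recursion applied to
`P (2·(2ⁿ·t) + 1)` produces `½·P t (d - 1)` plus `½·P (2ⁿ·t + 1) (d + 1)`, which is again of the
same shape with `n` lowered by one. Unrolling this `n` times, the `P_t^L` term survives only from
the last step, where `t + 1 = 2·(t/2 + 1)` for odd `t`.
-/

open Finset

lemma P_two_mul (m : ℕ) (d : ℤ) : P (2 * m) d = P m d := by
  match m with
  | 0 => rfl
  | k + 1 =>
    rw [show 2 * (k + 1) = k * 2 + 2 by ring, P, dif_pos (by omega),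
      show (k * 2 + 2) / 2 = k + 1 by omega]

lemma P_two_pow_mul (k m : ℕ) (d : ℤ) : P (2 ^ k * m) d = P m d := by
  induction k with
  | zero => simp
  | succ k ih => rw [pow_succ', mul_assoc, P_two_mul, ih]

lemma P_two_mul_add_one {m : ℕ} (hm : m ≠ 0) (d : ℤ) :
    P (2 * m + 1) d = 1 / 2 * P (m + 1) (d + 1) + 1 / 2 * P m (d - 1) := by
  obtain ⟨k, rfl⟩ := Nat.exists_eq_succ_of_ne_zero hm
  rw [show 2 * k.succ + 1 = (2 * k + 1) + 2 by omega, P, dif_neg (by omega),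
    show (2 * k + 1 + 2) / 2 = k.succ by omega]

lemma P_two_pow_succ_mul_add_one {t : ℕ} (ht : Odd t) (n : ℕ) (d : ℤ) :
    P (2 ^ (n + 1) * t + 1) d
      = (1 / 2 : ℝ) ^ (n + 1) * P (t / 2 + 1) (d + n + 1)
        + ∑ k ∈ range (n + 1), (1 / 2 : ℝ) ^ (k + 1) * P t (d + k - 1) := by
  have ht₀ : t ≠ 0 := by rintro rfl; exact Nat.not_odd_zero ht
  induction n generalizing d with
  | zero =>
    have hsucc : t + 1 = 2 * (t / 2 + 1) := by obtain ⟨s, rfl⟩ := ht; omega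
    rw [zero_add, pow_one, P_two_mul_add_one ht₀, hsucc, P_two_mul]
    simp
  | succ n ih =>
    rw [pow_succ', mul_assoc, P_two_mul_add_one (by positivity), ih, P_two_pow_mul,
      sum_range_succ' _ (n + 1), mul_add, mul_sum]
    push_cast
    ring_nf

lemma foldl_LRstep_replicate_L (n : ℕ) {u : ℕ} (hu : u ≠ 0) :
    (List.replicate n LR.L).foldl LRstep u = 2 ^ n * (u - 1) + 1 := by
  induction n generalizing u with
  | zero => rw [List.replicate_zero, List.foldl_nil, pow_zero, one_mul]; omega
  | succ n ih =>
    rw [List.replicate_succ, List.foldl_cons, LRstep, ih (by omega),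
      show 2 * u - 1 - 1 = 2 * (u - 1) by omega, pow_succ, mul_assoc]

lemma odd_LRstep {t : ℕ} (ht : Odd t) (a : LR) : Odd (LRstep t a) := by
  obtain ⟨s, rfl⟩ := ht
  cases a
  · exact ⟨2 * s, rfl⟩
  · exact ⟨2 * s + 1, rfl⟩

lemma odd_hword (w : List LR) : Odd (hword w) := by
  suffices ∀ t, Odd t → Odd (w.foldl LRstep t) from this 3 (by decide)
  induction w with
  | nil => exact fun _ ht => ht
  | cons a w ih => exact fun t ht => ih _ (odd_LRstep ht a)

lemma hword_append_R_replicate_L (v : List LR) (n : ℕ) :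
    hword (v ++ LR.R :: List.replicate n LR.L) = 2 ^ (n + 1) * hword v + 1 := by
  rw [hword, List.foldl_append, List.foldl_cons, foldl_LRstep_replicate_L n (by simp [LRstep]),
    ← hword, LRstep, Nat.add_sub_cancel, pow_succ, mul_assoc]

lemma sum_Icc_one_sub_eq_sum_range {M : Type*} [AddCommMonoid M] (n : ℕ) (f : ℤ → M) :
    ∑ i ∈ Icc (1 - (n : ℤ)) 1, f i = ∑ k ∈ range (n + 1), f (1 - k) := by
  refine sum_nbij' (fun i ↦ (1 - i).toNat) (fun k ↦ 1 - k) ?_ ?_ ?_ ?_ fun i hi ↦ congrArg f ?_ <;>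
    simp only [mem_Icc, mem_range] at * <;> omega

/-- For the odd integer `t = 2s+1 ≥ 3`, the left component is `P_t^L := P_{s+1}`;
since `h(v) = 2s+1` with `s = h(v)/2`, we have `P_{h(v)}^L = P (h(v)/2 + 1)`.
The iteration formula:
`P_{vRL^n}(d) = (1/2)^(n+1) P^L_{h(v)}(d+n+1) + ∑_{i=1-n}^{1} (1/2)^(2-i) P_v(d-i)`. -/
theorem P_append_R_Ln (v : List LR) (n : ℕ) (d : ℤ) :
    P (hword (v ++ LR.R :: List.replicate n LR.L)) d
      = (1/2 : ℝ) ^ (n + 1) * P (hword v / 2 + 1) (d + (n : ℤ) + 1)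
        + ∑ i ∈ Finset.Icc (1 - (n : ℤ)) 1, (1/2 : ℝ) ^ (2 - i) * P (hword v) (d - i) := by
  rw [hword_append_R_replicate_L, P_two_pow_succ_mul_add_one (odd_hword v),
    sum_Icc_one_sub_eq_sum_range]
  congr 1
  refine sum_congr rfl fun k _ ↦ ?_
  rw [show d - (1 - k) = d + k - 1 by ring,
    show (2 : ℤ) - (1 - k) = (k + 1 : ℕ) by push_cast; ring, zpow_natCast]
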